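/- arXiv:1603.07410 — 2 statements merged into one kernel-verified Lean document; each statement's English description precedes it below -/
import Mathlib

section
/- With t_x = (x + q)·t*/(u + q) and x ≤ u, we have t_x ≤ t*; hence filtering by the conservative Jaccard threshold s* = t*/(u/q + 1 - t*) introduces no false negatives: every domain X with containment t(Q,X) ≥ t* satisfies s(Q,X) ≥ s*. -/
/-!
The Jaccard similarity `s = t / (x/q + 1 - t)` increases with the containment `t` and decreases
with the size `x`; since `u ≥ x`, the threshold `s*` computed with the upper bound `u` is therefore
below the Jaccard similarity of every domain with `t ≥ t*`.
-/

/-- Jaccard similarity `|Q ∩ X| / |Q ∪ X|` in terms of the containment `t = |Q ∩ X| / |Q|` and the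
size ratio `ratio = |X| / |Q|`. -/
noncomputable def jaccardOfContainment (ratio t : ℝ) : ℝ := t / (ratio + 1 - t)

lemma jaccardOfContainment_le_jaccardOfContainment {r r' t t' : ℝ} (hr : 0 < r) (hrr' : r ≤ r')
    (ht : 0 ≤ t) (htt' : t ≤ t') (ht' : t' ≤ 1) :
    jaccardOfContainment r' t ≤ jaccardOfContainment r t' := by
  have hden_pos : 0 < r + 1 - t' := by linarith
  have hden_le : r + 1 - t' ≤ r' + 1 - t := by linarith
  exact div_le_div₀ (ht.trans htt') htt' hden_pos hden_le

lemma mul_div_le_self_of_le {α : Type*} [Field α] [LinearOrder α] [IsStrictOrderedRing α]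
    {a b c : α} (hab : a ≤ b) (hb : 0 < b) (hc : 0 ≤ c) :
    a * c / b ≤ c := by
  rw [div_le_iff₀ hb, mul_comm c]
  exact mul_le_mul_of_nonneg_right hab hc

theorem conservative_threshold_no_false_negatives_general (q x u tstar : ℝ)
    (hq : 0 < q) (hx : 0 < x) (hxu : x ≤ u) (ht0 : 0 < tstar) :
    (x + q) * tstar / (u + q) ≤ tstar ∧
    ∀ t : ℝ, tstar ≤ t → t ≤ 1 →
      tstar / (u / q + 1 - tstar) ≤ t / (x / q + 1 - t) :=
  ⟨mul_div_le_self_of_le (by linarith) (by linarith) ht0.le,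
    fun _ htstar ht1 => jaccardOfContainment_le_jaccardOfContainment (div_pos hx hq)
      (div_le_div_of_nonneg_right hxu hq.le) ht0.le htstar ht1⟩

theorem conservative_threshold_no_false_negatives (q x u tstar : ℝ)
    (hq : 0 < q) (hx : 0 < x) (hxu : x ≤ u) (ht0 : 0 < tstar) (ht1 : tstar ≤ 1) :
    (x + q) * tstar / (u + q) ≤ tstar ∧
    ∀ t : ℝ, tstar ≤ t → t ≤ 1 →
      tstar / (u / q + 1 - tstar) ≤ t / (x / q + 1 - t) :=
  conservative_threshold_no_false_negatives_general q x u tstar hq hx hxu ht0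
end

section
/- For any finite sets X, Y and a uniformly random injective hash assigning distinct values to elements of X ∪ Y (i.e., a uniformly random linear order on X ∪ Y), the probability that the minimum of X and the minimum of Y coincide equals |X ∩ Y| / |X ∪ Y|. -/
/-!
The minimal elements of `σ '' X` and `σ '' Y` coincide exactly when the element of `X ∪ Y`
at which `σ` is minimal lies in `X ∩ Y`. Composing with the transposition `swap a b` moves
that minimizer from `a` to `b`, so each element of `X ∪ Y` is the minimizer for the same
number of permutations, and the proportion of collisions is `|X ∩ Y| / |X ∪ Y|`.
-/

open Finset

theorem Finset.min'_image_eq_apply_iff {α β : Type*} [DecidableEq β] [LinearOrder β]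
    {f : α → β} {s : Finset α} (hs : s.Nonempty) {a : α} (ha : a ∈ s) :
    (s.image f).min' (hs.image f) = f a ↔ ∀ b ∈ s, f a ≤ f b := by
  simp [min'_eq_iff, mem_image_of_mem f ha]

theorem Finset.min'_image_eq_min'_image_iff {α β : Type*} [DecidableEq α] [DecidableEq β]
    [LinearOrder β] {f : α → β} (hf : Function.Injective f) {X Y : Finset α}
    (hX : X.Nonempty) (hY : Y.Nonempty) :
    (X.image f).min' (hX.image f) = (Y.image f).min' (hY.image f) ↔
      ∃ a ∈ X ∩ Y, ∀ b ∈ X ∪ Y, f a ≤ f b := by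
  obtain ⟨x, hx, hx_min⟩ := exists_min_image X f hX
  obtain ⟨y, hy, hy_min⟩ := exists_min_image Y f hY
  rw [(min'_image_eq_apply_iff hX hx).2 hx_min, (min'_image_eq_apply_iff hY hy).2 hy_min]
  constructor
  · intro hxy
    obtain rfl := hf hxy
    exact ⟨x, mem_inter.2 ⟨hx, hy⟩, forall_mem_union.2 ⟨hx_min, hy_min⟩⟩
  · rintro ⟨a, ha, ha_min⟩
    rw [mem_inter] at ha
    have hxa : f x = f a := le_antisymm (hx_min a ha.1) (ha_min x (mem_union_left _ hx))
    have hya : f y = f a := le_antisymm (hy_min a ha.2) (ha_min y (mem_union_right _ hy))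
    rw [hxa, hya]

theorem Equiv.swap_apply_mem {α : Type*} [DecidableEq α] {s : Finset α} {a b c : α}
    (ha : a ∈ s) (hb : b ∈ s) (hc : c ∈ s) : Equiv.swap a b c ∈ s := by
  rw [Equiv.swap_apply_def]
  split_ifs <;> assumption

namespace Equiv.Perm

variable {α : Type*} [Fintype α] [DecidableEq α] [LinearOrder α]

def minimizingAt (s : Finset α) (a : α) : Finset (Perm α) :=
  univ.filter fun σ => ∀ b ∈ s, σ a ≤ σ b

theorem mem_minimizingAt {s : Finset α} {a : α} {σ : Perm α} :
    σ ∈ minimizingAt s a ↔ ∀ b ∈ s, σ a ≤ σ b := by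
  simp [minimizingAt]

theorem card_minimizingAt_le {s : Finset α} {a b : α} (ha : a ∈ s) (hb : b ∈ s) :
    #(minimizingAt s a) ≤ #(minimizingAt s b) := by
  refine card_le_card_of_injOn (· * swap a b) (fun σ hσ => ?_)
    (mul_left_injective (swap a b)).injOn
  rw [mem_coe, mem_minimizingAt] at hσ ⊢
  intro c hc
  simpa using hσ _ (swap_apply_mem ha hb hc)

theorem card_minimizingAt_eq {s : Finset α} {a b : α} (ha : a ∈ s) (hb : b ∈ s) :
    #(minimizingAt s a) = #(minimizingAt s b) :=
  le_antisymm (card_minimizingAt_le ha hb) (card_minimizingAt_le hb ha)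

theorem pairwiseDisjoint_minimizingAt (s : Finset α) :
    (s : Set α).PairwiseDisjoint (minimizingAt s) := by
  intro a ha b hb hab
  refine disjoint_left.2 fun σ hσa hσb => hab (σ.injective ?_)
  rw [mem_minimizingAt] at hσa hσb
  exact le_antisymm (hσa b hb) (hσb a ha)

theorem biUnion_minimizingAt {s : Finset α} (hs : s.Nonempty) :
    s.biUnion (minimizingAt s) = univ := by
  refine eq_univ_of_forall fun σ => mem_biUnion.2 ?_
  obtain ⟨a, ha, ha_min⟩ := exists_min_image s σ hs
  exact ⟨a, ha, mem_minimizingAt.2 ha_min⟩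

theorem card_biUnion_minimizingAt {s t : Finset α} (hts : t ⊆ s) {a : α} (ha : a ∈ s) :
    #(t.biUnion (minimizingAt s)) = #t * #(minimizingAt s a) := by
  rw [card_biUnion ((pairwiseDisjoint_minimizingAt s).subset (coe_subset.2 hts)),
    sum_congr rfl fun b hb => card_minimizingAt_eq (hts hb) ha, sum_const, smul_eq_mul]

theorem card_mul_card_minimizingAt {s : Finset α} {a : α} (ha : a ∈ s) :
    #s * #(minimizingAt s a) = Fintype.card (Perm α) := by
  rw [← card_biUnion_minimizingAt subset_rfl ha, biUnion_minimizingAt ⟨a, ha⟩, card_univ]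

end Equiv.Perm

open Equiv.Perm in
theorem minhash_collision_probability {α : Type*} [Fintype α] [DecidableEq α]
    [LinearOrder α] (X Y : Finset α) (hX : X.Nonempty) (hY : Y.Nonempty) :
    ((Finset.univ.filter fun σ : Equiv.Perm α =>
        (X.image σ).min' (hX.image σ) = (Y.image σ).min' (hY.image σ)).card : ℝ) /
      (Fintype.card (Equiv.Perm α) : ℝ)
    = ((X ∩ Y).card : ℝ) / ((X ∪ Y).card : ℝ) := by
  obtain ⟨a, ha⟩ : (X ∪ Y).Nonempty := hX.mono subset_union_left
  have hcollide : (univ.filter fun σ : Equiv.Perm α =>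
      (X.image σ).min' (hX.image σ) = (Y.image σ).min' (hY.image σ)) =
      (X ∩ Y).biUnion (minimizingAt (X ∪ Y)) := by
    ext σ
    simp [min'_image_eq_min'_image_iff σ.injective hX hY, mem_minimizingAt]
  have hcount := card_mul_card_minimizingAt ha
  have hpos : 0 < #(minimizingAt (X ∪ Y) a) :=
    Nat.pos_of_mul_pos_left (hcount ▸ Fintype.card_pos)
  rw [hcollide, card_biUnion_minimizingAt inter_subset_union ha, ← hcount]
  push_cast
  exact mul_div_mul_right _ _ (by positivity)
end
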